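/- Let δ be a delay function, x ∈ Bool, and apply the forgetful single-history channel algorithm to an input event list. Denoting by S_n the output list after the n-th iteration and by S_n|t its restriction to events with time at most t, the following holds: for every t ∈ ℝ there exists N such that S_n|t = S_N|t for all n ≥ N. -/
import Mathlib


open scoped Classical

/-- The value of the last event of an output list (stored in reverse order, the most
recent event first); the implicit initial event is `(−∞, x)`. -/
def lastVal (x : Bool) : List (ℝ × Bool) → Bool
  | [] => x
  | e :: _ => e.2

/-- One iteration of the forgetful single-history channel algorithm with delay function
`δ`, limit delay `dinfty = δ∞`, and initial value `x`, processing input event `e`.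
The output list is stored in reverse order; the initial event `(−∞, x)` is implicit. -/
noncomputable def fstep (δ : ℝ → ℝ) (dinfty : ℝ) (x : Bool)
    (S : List (ℝ × Bool)) (e : ℝ × Bool) : List (ℝ × Bool) :=
  if e.2 = lastVal x S then S
  else
    match S with
    | [] => [(e.1 + dinfty, e.2)]
    | (t', b) :: rest =>
        if t' < e.1 + δ (e.1 - t') then (e.1 + δ (e.1 - t'), e.2) :: (t', b) :: rest
        else rest

/-- The output list `S_n` after `n` iterations of the forgetful algorithm on the
input event list `ev`. -/
noncomputable def fstates (δ : ℝ → ℝ) (dinfty : ℝ) (x : Bool) (ev : ℕ → ℝ × Bool) : ℕ → List (ℝ × Bool)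
  | 0 => []
  | n + 1 => fstep δ dinfty x (fstates δ dinfty x ev n) (ev n)

/-- stabilization of the forgetful single-history channel algorithm:
for every time `t`, the restriction `S_n|t` of the output list to events with time at
most `t` is eventually constant. -/
theorem forgetful_stabilizes (δ : ℝ → ℝ) (dinfty : ℝ) (x : Bool)
    (hmono : Monotone δ)
    (hlim : Filter.Tendsto δ Filter.atTop (nhds dinfty))
    (hpos : 0 < dinfty)
    (ev : ℕ → ℝ × Bool)
    (hnn : 0 ≤ (ev 0).1)
    (hinc : StrictMono fun n => (ev n).1)
    (htop : Filter.Tendsto (fun n => (ev n).1) Filter.atTop Filter.atTop)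
    (halt : ∀ n, (ev (n + 1)).2 ≠ (ev n).2) :
    ∀ t : ℝ, ∃ N : ℕ, ∀ n : ℕ, N ≤ n →
      (fstates δ dinfty x ev n).filter (fun e => e.1 ≤ t) =
        (fstates δ dinfty x ev N).filter (fun e => e.1 ≤ t) := by
  intro t
  -- choose M so that δ T > 0 for T ≥ M
  obtain ⟨M, hM⟩ := Filter.eventually_atTop.mp (hlim.eventually (lt_mem_nhds hpos))
  set C : ℝ := max (max t (t - δ 0)) (t + M) with hC
  obtain ⟨N, hN⟩ := Filter.eventually_atTop.mp (htop.eventually_gt_atTop C)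
  refine ⟨N, ?_⟩
  -- key step lemma
  have step : ∀ n : ℕ, N ≤ n →
      (fstates δ dinfty x ev (n + 1)).filter (fun e => e.1 ≤ t) =
        (fstates δ dinfty x ev n).filter (fun e => e.1 ≤ t) := by
    intro n hn
    have htn : C < (ev n).1 := hN n hn
    have htn1 : t < (ev n).1 := lt_of_le_of_lt (le_max_of_le_left (le_max_left _ _)) htn
    have htn2 : t - δ 0 < (ev n).1 := lt_of_le_of_lt (le_max_of_le_left (le_max_right _ _)) htn
    have htn3 : t + M < (ev n).1 := lt_of_le_of_lt (le_max_right _ _) htn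
    show (fstep δ dinfty x (fstates δ dinfty x ev n) (ev n)).filter (fun e => e.1 ≤ t) = _
    set S := fstates δ dinfty x ev n with hS
    by_cases h1 : (ev n).2 = lastVal x S
    · simp [fstep, h1]
    · match S with
      | [] =>
          simp only [fstep, h1, if_neg h1]
          have : ¬ ((ev n).1 + dinfty ≤ t) := by
            push_neg
            linarith
          simp [this]
      | (t', b) :: rest =>
          simp only [fstep, if_neg h1]
          by_cases h2 : t' < (ev n).1 + δ ((ev n).1 - t')
          · rw [if_pos h2]
            have hs : ¬ ((ev n).1 + δ ((ev n).1 - t') ≤ t) := by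
              push_neg
              rcases lt_or_ge t' (ev n).1 with h | h
              · have : δ 0 ≤ δ ((ev n).1 - t') := hmono (by linarith)
                linarith
              · linarith
            simp [hs]
          · rw [if_neg h2]
            have ht' : ¬ (t' ≤ t) := by
              intro ht'
              have h3 : M ≤ (ev n).1 - t' := by linarith
              have h4 : 0 < δ ((ev n).1 - t') := hM _ h3
              exact h2 (by linarith)
            simp [ht']
  intro n hn
  induction n, hn using Nat.le_induction with
  | base => rfl
  | succ n hn ih => rw [step n hn, ih]
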